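/- Let k ≥ 1 and p ≥ 0 be fixed integers. Then there exists a constant N_{p,k} > 0 such that for every integer n ≥ k + p + 2, every differentiable function f : [0,∞) → ℝ with both f ∈ C_p and f' ∈ C_p, and every x > 0, w_p(x)·|M_{n,k}(f; x) − f(x)| ≤ N_{p,k} · ‖f'‖_p · x/√n. -/

import Mathlib

open MeasureTheory Set

/-- The Gamma-type operator `M_{n,k}(f;x)`. -/
noncomputable def Mnk (n k : ℕ) (f : ℝ → ℝ) (x : ℝ) : ℝ :=
  (((2 * n - k + 1).factorial : ℝ) * x ^ (n + 1) /
      ((n.factorial : ℝ) * ((n - k).factorial : ℝ))) *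
    ∫ t in Ioi (0 : ℝ), t ^ (n - k) / (x + t) ^ (2 * n - k + 2) * f t

/-- The polynomial weight: `w_0 = 1`, `w_p(x) = 1/(1+x^p)` for `p ≥ 1`. -/
noncomputable def wp (p : ℕ) (x : ℝ) : ℝ := if p = 0 then 1 else 1 / (1 + x ^ p)

/-- The weighted sup-norm `‖f‖_p = sup_{x ≥ 0} w_p(x)|f(x)|`. -/
noncomputable def pNorm (p : ℕ) (f : ℝ → ℝ) : ℝ :=
  ⨆ x : {x : ℝ // 0 ≤ x}, wp p x.val * |f x.val|

/-- Second symmetric difference `Δ_h² f`. -/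
def Delta2 (h : ℝ) (f : ℝ → ℝ) (x : ℝ) : ℝ := f (x + 2 * h) - 2 * f (x + h) + f x

/-- Second weighted modulus of smoothness `ω_p²(f;δ)`. -/
noncomputable def omega2 (p : ℕ) (f : ℝ → ℝ) (δ : ℝ) : ℝ :=
  ⨆ h : {h : ℝ // 0 < h ∧ h ≤ δ}, pNorm p (Delta2 h.val f)

/-- First weighted modulus `ω_p¹(f;δ)`. -/
noncomputable def omega1 (p : ℕ) (f : ℝ → ℝ) (δ : ℝ) : ℝ :=
  sSup {y : ℝ | ∃ t x : ℝ, 0 ≤ t ∧ 0 ≤ x ∧ |t - x| ≤ δ ∧ y = wp p x * |f t - f x|}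

/-- Membership in the weighted space `C_p`: `w_p·f` is bounded and uniformly
continuous on `[0,∞)`. -/
def CpMem (p : ℕ) (f : ℝ → ℝ) : Prop :=
  (∃ B : ℝ, ∀ x ≥ (0 : ℝ), |wp p x * f x| ≤ B) ∧
    UniformContinuousOn (fun x => wp p x * f x) (Ici 0)

/-- Steklov mean `f_h`. -/
noncomputable def steklov (f : ℝ → ℝ) (h : ℝ) (x : ℝ) : ℝ :=
  4 / h ^ 2 *
    ∫ s in (0 : ℝ)..(h / 2), ∫ t in (0 : ℝ)..(h / 2),
      (2 * f (x + s + t) - f (x + 2 * (s + t)))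

open Filter Topology
open scoped Nat

/-!
`M_{n,k}` is a positive operator reproducing constants, and its moments are Beta integrals:
`M_{n,k}(t^m; x) = a_m x^m` with `a_m = (n-k+m)! (n-m)! / ((n-k)! n!)`. The ratios
`a_{m+1}/a_m = (n-k+m+1)/(n-m)` show that `a_m` is bounded and that the second difference
`a_{m+2} - 2a_{m+1} + a_m`, i.e. the weighted second central moment, is `O(1/n)`.
By the mean value theorem `|f t - f x| ≤ ‖f'‖_p (1 + x^p + t^p) |t - x|`, and
`|t - x| ≤ δ + (t - x)^2/δ`; applying `M_{n,k}` bounds `|M_{n,k}(f;x) - f(x)|` by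
`‖f'‖_p (1 + x^p) (δ + x^2/(nδ))` up to constants; as `w_p(x) (1 + x^p) ≤ 2`, the choice
`δ = x/√n` gives the rate.
-/

section BetaIntegral

variable {x : ℝ}

lemma integral_Ioi_inv_add_pow (hx : 0 < x) (c : ℕ) :
    IntegrableOn (fun t => ((x + t) ^ (c + 2))⁻¹) (Ioi 0) ∧
      ∫ t in Ioi (0 : ℝ), ((x + t) ^ (c + 2))⁻¹ = ((c + 1) * x ^ (c + 1))⁻¹ := by
  set g : ℝ → ℝ := fun t => -((c + 1) * (x + t) ^ (c + 1))⁻¹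
  have hderiv : ∀ t ∈ Ici (0 : ℝ), HasDerivAt g ((x + t) ^ (c + 2))⁻¹ t := by
    intro t ht
    have hxt : 0 < x + t := by have := ht.out; positivity
    have hpow : HasDerivAt (fun t => (x + t) ^ (c + 1)) ((c + 1) * (x + t) ^ c) t := by
      simpa [Pi.pow_def] using ((hasDerivAt_id t).const_add x).pow (c + 1)
    refine ((hpow.const_mul ((c : ℝ) + 1)).inv (by positivity)).neg.congr_deriv ?_
    field_simp
    ring
  have hnonneg : ∀ t ∈ Ioi (0 : ℝ), 0 ≤ ((x + t) ^ (c + 2))⁻¹ := by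
    intro t ht
    have := ht.out
    positivity
  have hlim : Tendsto g atTop (𝓝 0) := by
    have : Tendsto (fun t : ℝ => (c + 1) * (x + t) ^ (c + 1)) atTop atTop :=
      ((tendsto_pow_atTop (Nat.succ_ne_zero c)).comp
        (tendsto_atTop_add_const_left _ x tendsto_id)).const_mul_atTop (by positivity)
    simpa [g] using this.inv_tendsto_atTop.neg
  refine ⟨integrableOn_Ioi_deriv_of_nonneg' hderiv hnonneg hlim, ?_⟩
  rw [integral_Ioi_of_hasDerivAt_of_nonneg' hderiv hnonneg hlim]
  simp [g]

lemma integral_Ioi_pow_div_add_pow (hx : 0 < x) (a c : ℕ) :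
    IntegrableOn (fun t => t ^ a / (x + t) ^ (a + c + 2)) (Ioi 0) ∧
      ∫ t in Ioi (0 : ℝ), t ^ a / (x + t) ^ (a + c + 2) =
        a ! * c ! / ((a + c + 1)! * x ^ (c + 1)) := by
  induction a generalizing c with
  | zero =>
    obtain ⟨hint, hval⟩ := integral_Ioi_inv_add_pow hx c
    simp only [pow_zero, zero_add, one_div, Nat.factorial_zero, Nat.cast_one, one_mul]
    refine ⟨hint, ?_⟩
    rw [hval, Nat.factorial_succ]
    push_cast
    field_simp
  | succ a ih =>
    obtain ⟨hint₀, hval₀⟩ := ih c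
    obtain ⟨hint₁, hval₁⟩ := ih (c + 1)
    -- writing `t = (x + t) - x` lowers the power of `t`
    have hsplit : (fun t : ℝ => t ^ (a + 1) / (x + t) ^ (a + 1 + c + 2)) =
        fun t => t ^ a / (x + t) ^ (a + c + 2) - x * (t ^ a / (x + t) ^ (a + (c + 1) + 2)) := by
      funext t
      rcases eq_or_ne (x + t) 0 with h | h
      · simp [h]
      · field_simp
        ring
    rw [hsplit, integral_sub hint₀ (hint₁.const_mul x), integral_const_mul, hval₀, hval₁]
    refine ⟨hint₀.sub (hint₁.const_mul x), ?_⟩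
    rw [show a + 1 + c + 1 = a + c + 1 + 1 by ring, show a + (c + 1) + 1 = a + c + 1 + 1 by ring]
    simp only [Nat.factorial_succ]
    push_cast
    field_simp
    ring

end BetaIntegral

noncomputable def momentCoef (n k m : ℕ) : ℝ :=
  (n - k + m)! * (n - m)! / ((n - k)! * n !)

-- `M_{n,k}(t ^ m * (t - x) ^ 2; x) = centralMomentCoef n k m * x ^ (m + 2)`
noncomputable def centralMomentCoef (n k m : ℕ) : ℝ :=
  momentCoef n k (m + 2) - 2 * momentCoef n k (m + 1) + momentCoef n k m

section MomentCoef

variable {n k m : ℕ}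

lemma momentCoef_zero : momentCoef n k 0 = 1 := by
  simp [momentCoef, Nat.factorial_ne_zero]

lemma momentCoef_succ_mul (hm : m < n) :
    momentCoef n k (m + 1) * (n - m : ℕ) = momentCoef n k m * (n - k + m + 1 : ℕ) := by
  unfold momentCoef
  rw [← Nat.add_assoc, Nat.factorial_succ, show n - m = n - (m + 1) + 1 by omega,
    Nat.factorial_succ]
  push_cast
  field_simp

lemma momentCoef_le_pow {p : ℕ} (hpn : p + 1 ≤ n) (hm : m ≤ p) :
    momentCoef n k m ≤ (p + 1) ^ m := by
  induction m with
  | zero => simp [momentCoef_zero]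
  | succ j ih =>
    have hrec := momentCoef_succ_mul (k := k) (show j < n by omega)
    have hratio : ((n - k + j + 1 : ℕ) : ℝ) ≤ (p + 1) * (n - j : ℕ) := by
      obtain ⟨d, rfl⟩ : ∃ d, n = j + d := ⟨n - j, by omega⟩
      rw [Nat.add_sub_cancel_left]
      have : j + d - k + j + 1 ≤ (p + 1) * d := by
        have : j + d - k ≤ j + d := Nat.sub_le _ _
        nlinarith
      exact_mod_cast this
    have hpos : (0 : ℝ) < (n - j : ℕ) := by exact_mod_cast (show 0 < n - j by omega)
    refine le_of_mul_le_mul_right ?_ hpos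
    calc momentCoef n k (j + 1) * (n - j : ℕ)
        = momentCoef n k j * (n - k + j + 1 : ℕ) := hrec
      _ ≤ (p + 1) ^ j * ((p + 1) * (n - j : ℕ)) :=
        mul_le_mul (ih (by omega)) hratio (Nat.cast_nonneg _) (by positivity)
      _ = (p + 1) ^ (j + 1) * (n - j : ℕ) := by ring

lemma centralMomentCoef_mul (hkn : k ≤ n) (hm : m + 2 ≤ n) :
    centralMomentCoef n k m * (((n : ℝ) - m) * ((n : ℝ) - m - 1)) =
      momentCoef n k m * (2 * ((n : ℝ) - m) + (2 * m + 1 - k) ^ 2 + 3 * (2 * m + 1 - k)) := by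
  have h₀ := momentCoef_succ_mul (k := k) (show m < n by omega)
  have h₁ := momentCoef_succ_mul (k := k) (show m + 1 < n by omega)
  push_cast [Nat.cast_sub hkn, Nat.cast_sub (show m ≤ n by omega),
    Nat.cast_sub (show m + 1 ≤ n by omega)] at h₀ h₁
  unfold centralMomentCoef
  linear_combination ((n : ℝ) - m) * h₁ + (2 * m + 1 - k + 3 - ((n : ℝ) - m)) * h₀

lemma centralMomentCoef_le {p : ℕ} (hn : k + p + 2 ≤ n) (hm : m ≤ p) :
    centralMomentCoef n k m ≤ (p + 1) ^ p * (2 + (2 * p + k + 3) ^ 2) * (p + 2) / n := by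
  have hγ : (k : ℝ) + 2 ≤ (n : ℝ) - m := by
    have : (k + m + 2 : ℝ) ≤ n := by exact_mod_cast (show k + m + 2 ≤ n by omega)
    linarith
  have hn_le : (n : ℝ) ≤ (p + 2) * ((n : ℝ) - m - 1) := by
    have : (k + p + 2 : ℝ) ≤ n := by exact_mod_cast hn
    have : (m : ℝ) ≤ p := by exact_mod_cast hm
    nlinarith
  have hs : (2 * m + 1 - k : ℝ) ^ 2 + 3 * (2 * m + 1 - k) ≤ (2 * p + k + 3) ^ 2 := by
    have : (m : ℝ) ≤ p := by exact_mod_cast hm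
    have : (0 : ℝ) ≤ m := by positivity
    have : (0 : ℝ) ≤ k := by positivity
    nlinarith
  have ha : momentCoef n k m ≤ (p + 1) ^ p :=
    (momentCoef_le_pow (by omega) hm).trans (pow_le_pow_right₀ (by linarith) hm)
  have hγ₁ : 0 < (n : ℝ) - m - 1 := by linarith [(Nat.cast_nonneg k : (0 : ℝ) ≤ k)]
  have hDγ : centralMomentCoef n k m * ((n : ℝ) - m - 1) ≤
      (p + 1) ^ p * (2 + (2 * p + k + 3) ^ 2) := by
    refine le_of_mul_le_mul_right ?_ (show 0 < (n : ℝ) - m by linarith)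
    calc centralMomentCoef n k m * ((n : ℝ) - m - 1) * ((n : ℝ) - m)
        = momentCoef n k m * (2 * ((n : ℝ) - m) + (2 * m + 1 - k) ^ 2 + 3 * (2 * m + 1 - k)) := by
          rw [← centralMomentCoef_mul (by omega) (by omega)]
          ring
      _ ≤ (p + 1) ^ p * ((2 + (2 * p + k + 3) ^ 2) * ((n : ℝ) - m)) := by
          refine mul_le_mul ha (by nlinarith) ?_ (by positivity)
          nlinarith [sq_nonneg (2 * m + 1 - k + 3 / 2 : ℝ)]
      _ = _ := by ring
  have hn : (0 : ℝ) < n := by linarith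
  rw [le_div_iff₀ hn]
  rcases le_or_gt 0 (centralMomentCoef n k m) with hD | hD
  · nlinarith [mul_le_mul_of_nonneg_left hn_le hD]
  · nlinarith [show (0 : ℝ) ≤ (p + 1) ^ p * (2 + (2 * p + k + 3) ^ 2) * (p + 2) by positivity]

end MomentCoef

noncomputable def gammaKernel (n k : ℕ) (x t : ℝ) : ℝ :=
  t ^ (n - k) / (x + t) ^ (2 * n - k + 2)

noncomputable def gammaConst (n k : ℕ) (x : ℝ) : ℝ :=
  (2 * n - k + 1)! * x ^ (n + 1) / (n ! * (n - k)!)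

lemma Mnk_eq_gammaConst_mul (n k : ℕ) (f : ℝ → ℝ) (x : ℝ) :
    Mnk n k f x = gammaConst n k x * ∫ t in Ioi 0, gammaKernel n k x t * f t :=
  rfl

section Kernel

variable {n k : ℕ} {x : ℝ}

lemma gammaKernel_nonneg (hx : 0 < x) {t : ℝ} (ht : 0 < t) : 0 ≤ gammaKernel n k x t := by
  unfold gammaKernel
  positivity

lemma gammaKernel_mul_pow_eq {m : ℕ} (hkn : k ≤ n) (hm : m ≤ n) (t : ℝ) :
    gammaKernel n k x t * t ^ m = t ^ (n - k + m) / (x + t) ^ ((n - k + m) + (n - m) + 2) := by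
  rw [gammaKernel, show n - k + m + (n - m) + 2 = 2 * n - k + 2 by omega, pow_add]
  ring

lemma integrableOn_gammaKernel_mul_pow (hx : 0 < x) {m : ℕ} (hkn : k ≤ n) (hm : m ≤ n) :
    IntegrableOn (fun t => gammaKernel n k x t * t ^ m) (Ioi 0) := by
  simpa only [gammaKernel_mul_pow_eq hkn hm] using
    (integral_Ioi_pow_div_add_pow hx (n - k + m) (n - m)).1

lemma Mnk_pow (hx : 0 < x) {m : ℕ} (hkn : k ≤ n) (hm : m ≤ n) :
    Mnk n k (fun t => t ^ m) x = momentCoef n k m * x ^ m := by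
  have hval := (integral_Ioi_pow_div_add_pow hx (n - k + m) (n - m)).2
  simp only [← gammaKernel_mul_pow_eq hkn hm] at hval
  rw [show n - k + m + (n - m) + 1 = 2 * n - k + 1 by omega] at hval
  rw [Mnk_eq_gammaConst_mul, hval, gammaConst, momentCoef,
    show x ^ (n + 1) = x ^ (n - m + 1) * x ^ m by rw [← pow_add]; congr 1; omega]
  field_simp

variable {f g : ℝ → ℝ}

lemma Mnk_add (hf : IntegrableOn (fun t => gammaKernel n k x t * f t) (Ioi 0))
    (hg : IntegrableOn (fun t => gammaKernel n k x t * g t) (Ioi 0)) :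
    Mnk n k (fun t => f t + g t) x = Mnk n k f x + Mnk n k g x := by
  simp only [Mnk_eq_gammaConst_mul, mul_add, integral_add hf hg]

lemma Mnk_const_mul (c : ℝ) : Mnk n k (fun t => c * f t) x = c * Mnk n k f x := by
  simp only [Mnk_eq_gammaConst_mul, mul_left_comm _ c, integral_const_mul]

lemma integrableOn_gammaKernel_mul_const_mul
    (hf : IntegrableOn (fun t => gammaKernel n k x t * f t) (Ioi 0)) (c : ℝ) :
    IntegrableOn (fun t => gammaKernel n k x t * (c * f t)) (Ioi 0) :=
  IntegrableOn.congr_fun (hf.const_mul c) (fun _ _ => mul_left_comm _ _ _) measurableSet_Ioi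

lemma integrableOn_gammaKernel_mul_add
    (hf : IntegrableOn (fun t => gammaKernel n k x t * f t) (Ioi 0))
    (hg : IntegrableOn (fun t => gammaKernel n k x t * g t) (Ioi 0)) :
    IntegrableOn (fun t => gammaKernel n k x t * (f t + g t)) (Ioi 0) :=
  (hf.add hg).congr_fun (fun _ _ => (mul_add _ _ _).symm) measurableSet_Ioi

lemma integrableOn_gammaKernel (hx : 0 < x) (hkn : k ≤ n) :
    IntegrableOn (gammaKernel n k x) (Ioi 0) := by
  simpa using integrableOn_gammaKernel_mul_pow hx hkn (Nat.zero_le n) (m := 0)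

lemma Mnk_const (hx : 0 < x) (hkn : k ≤ n) (c : ℝ) : Mnk n k (fun _ => c) x = c := by
  have h := Mnk_pow hx hkn (Nat.zero_le n) (m := 0)
  simp only [pow_zero, momentCoef_zero, mul_one] at h
  simpa [h] using Mnk_const_mul (n := n) (k := k) (x := x) (f := fun _ => 1) c

lemma Mnk_sub_self (hx : 0 < x) (hkn : k ≤ n)
    (hf : IntegrableOn (fun t => gammaKernel n k x t * (f t - f x)) (Ioi 0)) :
    Mnk n k f x - f x = Mnk n k (fun t => f t - f x) x := by
  calc Mnk n k f x - f x = Mnk n k (fun t => (f t - f x) + f x) x - f x := by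
        simp only [sub_add_cancel]
    _ = Mnk n k (fun t => f t - f x) x := by
        rw [Mnk_add hf ((integrableOn_gammaKernel hx hkn).mul_const (f x)), Mnk_const hx hkn]
        ring

lemma integrableOn_gammaKernel_mul_of_abs_le
    (hf : AEStronglyMeasurable f (volume.restrict (Ioi 0)))
    (hg : IntegrableOn (fun t => gammaKernel n k x t * g t) (Ioi 0))
    (hfg : ∀ t > 0, |f t| ≤ g t) (hx : 0 < x) :
    IntegrableOn (fun t => gammaKernel n k x t * f t) (Ioi 0) := by
  refine hg.mono' ((Measurable.aestronglyMeasurable (by unfold gammaKernel; fun_prop)).mul hf) ?_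
  rw [ae_restrict_iff' measurableSet_Ioi]
  refine ae_of_all _ fun t ht => ?_
  rw [Real.norm_eq_abs, abs_mul, abs_of_nonneg (gammaKernel_nonneg hx ht)]
  exact mul_le_mul_of_nonneg_left (hfg t ht) (gammaKernel_nonneg hx ht)

lemma abs_Mnk_le (hf : AEStronglyMeasurable f (volume.restrict (Ioi 0)))
    (hg : IntegrableOn (fun t => gammaKernel n k x t * g t) (Ioi 0))
    (hfg : ∀ t > 0, |f t| ≤ g t) (hx : 0 < x) :
    |Mnk n k f x| ≤ Mnk n k g x := by
  have hf' := integrableOn_gammaKernel_mul_of_abs_le hf hg hfg hx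
  have hc : 0 ≤ gammaConst n k x := by unfold gammaConst; positivity
  rw [Mnk_eq_gammaConst_mul, Mnk_eq_gammaConst_mul, abs_mul, abs_of_nonneg hc]
  refine mul_le_mul_of_nonneg_left ?_ hc
  refine (abs_integral_le_integral_abs).trans (setIntegral_mono_on hf'.abs hg measurableSet_Ioi ?_)
  intro t ht
  rw [abs_mul, abs_of_nonneg (gammaKernel_nonneg hx ht)]
  exact mul_le_mul_of_nonneg_left (hfg t ht) (gammaKernel_nonneg hx ht)

end Kernel

noncomputable def distMajorant (x δ : ℝ) (m : ℕ) (t : ℝ) : ℝ :=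
  t ^ m * (δ + (t - x) ^ 2 / δ)

noncomputable def distMajorantConst (p k : ℕ) : ℝ :=
  (p + 1) ^ p + (p + 1) ^ p * (2 + (2 * p + k + 3) ^ 2) * (p + 2)

lemma distMajorantConst_pos (p k : ℕ) : 0 < distMajorantConst p k := by
  unfold distMajorantConst
  positivity

section Majorant

variable {n k m : ℕ} {x δ : ℝ}

lemma pow_mul_abs_sub_le_distMajorant (hδ : 0 < δ) {t : ℝ} (ht : 0 ≤ t) :
    t ^ m * |t - x| ≤ distMajorant x δ m t := by
  refine mul_le_mul_of_nonneg_left ?_ (by positivity)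
  rw [← sub_nonneg, show δ + (t - x) ^ 2 / δ - |t - x| = (|t - x| - δ) ^ 2 / δ + |t - x| by
    rw [← sq_abs (t - x)]; field_simp; ring]
  positivity

lemma Mnk_pow_mul_quadratic (hx : 0 < x) (hkn : k ≤ n) (hm : m + 2 ≤ n) (α β γ : ℝ) :
    IntegrableOn (fun t => gammaKernel n k x t * (α * t ^ m + β * t ^ (m + 1) + γ * t ^ (m + 2)))
        (Ioi 0) ∧
      Mnk n k (fun t => α * t ^ m + β * t ^ (m + 1) + γ * t ^ (m + 2)) x =
        α * (momentCoef n k m * x ^ m) + β * (momentCoef n k (m + 1) * x ^ (m + 1)) +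
          γ * (momentCoef n k (m + 2) * x ^ (m + 2)) := by
  have hI (c : ℝ) (j : ℕ) (hj : j ≤ n) :=
    integrableOn_gammaKernel_mul_const_mul (integrableOn_gammaKernel_mul_pow hx hkn hj) c
  have hI₀ := hI α m (by omega)
  have hI₁ := hI β (m + 1) (by omega)
  have hI₂ := hI γ (m + 2) (by omega)
  have hI₀₁ := integrableOn_gammaKernel_mul_add hI₀ hI₁
  refine ⟨integrableOn_gammaKernel_mul_add hI₀₁ hI₂, ?_⟩
  rw [Mnk_add hI₀₁ hI₂, Mnk_add hI₀ hI₁, Mnk_const_mul, Mnk_const_mul, Mnk_const_mul,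
    Mnk_pow hx hkn (by omega), Mnk_pow hx hkn (by omega), Mnk_pow hx hkn (by omega)]

lemma Mnk_distMajorant (hx : 0 < x) (hkn : k ≤ n) (hm : m + 2 ≤ n) :
    IntegrableOn (fun t => gammaKernel n k x t * distMajorant x δ m t) (Ioi 0) ∧
      Mnk n k (distMajorant x δ m) x =
        momentCoef n k m * x ^ m * δ + centralMomentCoef n k m * x ^ (m + 2) / δ := by
  have hexpand : distMajorant x δ m = fun t =>
      (δ + x ^ 2 / δ) * t ^ m + (-2 * x / δ) * t ^ (m + 1) + δ⁻¹ * t ^ (m + 2) := by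
    funext t
    unfold distMajorant
    ring
  obtain ⟨hint, hval⟩ := Mnk_pow_mul_quadratic hx hkn hm (δ + x ^ 2 / δ) (-2 * x / δ) δ⁻¹
  rw [hexpand]
  refine ⟨hint, hval.trans ?_⟩
  unfold centralMomentCoef
  ring

lemma Mnk_distMajorant_le {p : ℕ} (hx : 0 < x) (hn : k + p + 2 ≤ n) (hm : m ≤ p) :
    Mnk n k (distMajorant x (x / √n) m) x ≤ distMajorantConst p k * x ^ m * (x / √n) := by
  have hn₀ : (0 : ℝ) < n := by exact_mod_cast (show 0 < n by omega)
  rw [(Mnk_distMajorant hx (by omega) (by omega)).2]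
  calc momentCoef n k m * x ^ m * (x / √n) + centralMomentCoef n k m * x ^ (m + 2) / (x / √n)
      ≤ (p + 1) ^ p * x ^ m * (x / √n) +
          (p + 1) ^ p * (2 + (2 * p + k + 3) ^ 2) * (p + 2) / n * x ^ (m + 2) / (x / √n) := by
        gcongr
        · exact (momentCoef_le_pow (by omega) hm).trans
            (pow_le_pow_right₀ (by linarith [(Nat.cast_nonneg p : (0 : ℝ) ≤ p)]) hm)
        · exact centralMomentCoef_le hn hm
    _ = _ := by
        unfold distMajorantConst
        have hsq := Real.sq_sqrt hn₀.le
        set s := √(n : ℝ)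
        rw [← hsq]
        field_simp
        ring

end Majorant

lemma abs_Mnk_sub_le {n k p : ℕ} {x δ L : ℝ} {f : ℝ → ℝ} (hx : 0 < x) (hkn : k ≤ n)
    (hpn : p + 2 ≤ n) (hδ : 0 < δ) (hL : 0 ≤ L) (hf : ContinuousOn f (Ioi 0))
    (hdiff : ∀ t > 0, |f t - f x| ≤ L * (1 + x ^ p + t ^ p) * |t - x|) :
    |Mnk n k f x - f x| ≤
      L * ((1 + x ^ p) * Mnk n k (distMajorant x δ 0) x + Mnk n k (distMajorant x δ p) x) := by
  obtain ⟨hint₀, -⟩ := Mnk_distMajorant (δ := δ) hx hkn (show 0 + 2 ≤ n by omega)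
  obtain ⟨hintₚ, -⟩ := Mnk_distMajorant (δ := δ) hx hkn hpn
  have hint := integrableOn_gammaKernel_mul_add
    (integrableOn_gammaKernel_mul_const_mul hint₀ (1 + x ^ p)) hintₚ
  set g : ℝ → ℝ := fun t => L * ((1 + x ^ p) * distMajorant x δ 0 t + distMajorant x δ p t)
  have hg : IntegrableOn (fun t => gammaKernel n k x t * g t) (Ioi 0) :=
    integrableOn_gammaKernel_mul_const_mul hint L
  have hfg : ∀ t > 0, |f t - f x| ≤ g t := by
    intro t ht
    calc |f t - f x| ≤ L * ((1 + x ^ p) * (t ^ 0 * |t - x|) + t ^ p * |t - x|) :=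
          (hdiff t ht).trans_eq (by ring)
      _ ≤ g t := by
          refine mul_le_mul_of_nonneg_left (add_le_add ?_ ?_) hL
          · exact mul_le_mul_of_nonneg_left (pow_mul_abs_sub_le_distMajorant hδ ht.le)
              (by positivity)
          · exact pow_mul_abs_sub_le_distMajorant hδ ht.le
  have hmeas : AEStronglyMeasurable (fun t => f t - f x) (volume.restrict (Ioi 0)) :=
    (hf.sub continuousOn_const).aestronglyMeasurable measurableSet_Ioi
  rw [Mnk_sub_self hx hkn (integrableOn_gammaKernel_mul_of_abs_le hmeas hg hfg hx)]
  refine (abs_Mnk_le hmeas hg hfg hx).trans_eq ?_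
  simp only [g]
  rw [Mnk_const_mul, Mnk_add (integrableOn_gammaKernel_mul_const_mul hint₀ _) hintₚ,
    Mnk_const_mul]

section Weight

variable {p : ℕ} {y : ℝ}

lemma wp_pos (hy : 0 ≤ y) : 0 < wp p y := by
  unfold wp
  split_ifs <;> positivity

lemma wp_mul_one_add_pow_le_two (hy : 0 ≤ y) : wp p y * (1 + y ^ p) ≤ 2 := by
  unfold wp
  split_ifs with hp
  · norm_num [hp]
  · rw [one_div, inv_mul_cancel₀ (by positivity)]
    norm_num

lemma one_le_wp_mul_one_add_pow (hy : 0 ≤ y) : 1 ≤ wp p y * (1 + y ^ p) := by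
  unfold wp
  split_ifs with hp
  · norm_num [hp]
  · rw [one_div, inv_mul_cancel₀ (by positivity)]

variable {g : ℝ → ℝ}

lemma CpMem.wp_mul_abs_le_pNorm (hg : CpMem p g) (hy : 0 ≤ y) : wp p y * |g y| ≤ pNorm p g := by
  obtain ⟨B, hB⟩ := hg.1
  refine le_ciSup (f := fun u : {u : ℝ // 0 ≤ u} => wp p u.val * |g u.val|)
    ⟨B, ?_⟩ ⟨y, hy⟩
  rintro _ ⟨u, rfl⟩
  simpa [abs_mul, abs_of_pos (wp_pos u.2)] using hB u.val u.2

lemma CpMem.pNorm_nonneg (hg : CpMem p g) : 0 ≤ pNorm p g :=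
  (mul_nonneg (wp_pos le_rfl).le (abs_nonneg _)).trans (hg.wp_mul_abs_le_pNorm le_rfl)

lemma CpMem.abs_le_pNorm_mul (hg : CpMem p g) (hy : 0 ≤ y) :
    |g y| ≤ pNorm p g * (1 + y ^ p) :=
  calc |g y| ≤ wp p y * (1 + y ^ p) * |g y| :=
        le_mul_of_one_le_left (abs_nonneg _) (one_le_wp_mul_one_add_pow hy)
    _ = wp p y * |g y| * (1 + y ^ p) := by ring
    _ ≤ pNorm p g * (1 + y ^ p) := by
        gcongr
        exact hg.wp_mul_abs_le_pNorm hy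

end Weight

lemma abs_sub_le_of_hasDerivWithinAt_Ici {f f' : ℝ → ℝ} {p : ℕ} {L : ℝ}
    (hder : ∀ x ≥ (0 : ℝ), HasDerivWithinAt f (f' x) (Ici 0) x)
    (hf' : ∀ u ≥ (0 : ℝ), |f' u| ≤ L * (1 + u ^ p)) (hL : 0 ≤ L) {x t : ℝ}
    (hx : 0 ≤ x) (ht : 0 ≤ t) :
    |f t - f x| ≤ L * (1 + x ^ p + t ^ p) * |t - x| := by
  have hs : Icc 0 (max x t) ⊆ Ici 0 := Icc_subset_Ici_self
  refine (convex_Icc 0 (max x t)).norm_image_sub_le_of_norm_hasDerivWithin_le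
    (fun u hu => (hder u hu.1).mono hs) (fun u hu => ?_)
    ⟨hx, le_max_left x t⟩ ⟨ht, le_max_right x t⟩
  have hup : u ^ p ≤ x ^ p + t ^ p := by
    rcases le_total x t with h | h
    · have := pow_le_pow_left₀ hu.1 (hu.2.trans (max_eq_right h).le) p
      linarith [pow_nonneg hx p]
    · have := pow_le_pow_left₀ hu.1 (hu.2.trans (max_eq_left h).le) p
      linarith [pow_nonneg ht p]
  calc ‖f' u‖ ≤ L * (1 + u ^ p) := hf' u hu.1
    _ ≤ L * (1 + x ^ p + t ^ p) := mul_le_mul_of_nonneg_left (by linarith) hL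

theorem Mnk_rate_C1_general (k p : ℕ) :
    ∃ N > (0 : ℝ), ∀ n : ℕ, k + p + 2 ≤ n → ∀ f f' : ℝ → ℝ,
      (∀ x ≥ (0 : ℝ), HasDerivWithinAt f (f' x) (Ici 0) x) →
      CpMem p f → CpMem p f' →
      ∀ x : ℝ, 0 < x →
        wp p x * |Mnk n k f x - f x| ≤ N * pNorm p f' * x / Real.sqrt (n : ℝ) := by
  refine ⟨4 * distMajorantConst p k, by linarith [distMajorantConst_pos p k],
    fun n hn f f' hder _ hf' x hx => ?_⟩
  have hL := hf'.pNorm_nonneg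
  have hδ : 0 < x / √n := div_pos hx (Real.sqrt_pos.2 (by exact_mod_cast (show 0 < n by omega)))
  have hcore := abs_Mnk_sub_le (n := n) (k := k) (p := p) hx (by omega) (by omega) hδ hL
    (fun t ht => (hder t (le_of_lt ht)).continuousWithinAt.mono Ioi_subset_Ici_self)
    (fun t ht => abs_sub_le_of_hasDerivWithinAt_Ici hder (fun u hu => hf'.abs_le_pNorm_mul hu)
      hL hx.le ht.le)
  have hw := wp_pos (p := p) hx.le
  have hw₁ := wp_mul_one_add_pow_le_two (p := p) hx.le
  set K := distMajorantConst p k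
  calc wp p x * |Mnk n k f x - f x|
      ≤ wp p x * (pNorm p f' *
          ((1 + x ^ p) * (K * x ^ 0 * (x / √n)) + K * x ^ p * (x / √n))) := by
        refine mul_le_mul_of_nonneg_left (hcore.trans ?_) hw.le
        gcongr
        · exact Mnk_distMajorant_le hx hn (Nat.zero_le p)
        · exact Mnk_distMajorant_le hx hn le_rfl
    _ = (wp p x * (1 + x ^ p) + wp p x * x ^ p) * (K * pNorm p f' * (x / √n)) := by ring
    _ ≤ (2 + 2) * (K * pNorm p f' * (x / √n)) := by
        have := (distMajorantConst_pos p k).le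
        gcongr
        nlinarith
    _ = 4 * K * pNorm p f' * x / √n := by ring

/-- Rate of convergence for differentiable functions:
`w_p(x)|M_{n,k}(f;x) − f(x)| ≤ N_{p,k}·‖f'‖_p·x/√n`. -/
theorem Mnk_rate_C1 (k p : ℕ) (hk : 1 ≤ k) :
    ∃ N > (0 : ℝ), ∀ n : ℕ, k + p + 2 ≤ n → ∀ f f' : ℝ → ℝ,
      (∀ x ≥ (0 : ℝ), HasDerivWithinAt f (f' x) (Ici 0) x) →
      CpMem p f → CpMem p f' →
      ∀ x : ℝ, 0 < x →
        wp p x * |Mnk n k f x - f x| ≤ N * pNorm p f' * x / Real.sqrt (n : ℝ) :=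
  Mnk_rate_C1_general k p
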